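/- Let λ ∈ (0, 1/2), p > 2, δ > 0, l ≥ 0. Define ψ(u) = (1/δ) ∫_l^u s^{1/p} (1 + (s-l)/δ)^{-(1-λ)/p} ((s-l)/δ)^{-2λ/p} ds for u ≥ l. Then for any ε ∈ (0,1) there exist constants 0 < c(ε) ≤ C(ε) such that for all u ≥ l with (u-l)/δ ≥ ε: c(ε) ψ(u)^{ρ(λ)} ≤ u^{1/(p-1-λ)} ((u-l)/δ) ≤ C(ε) ψ(u)^{ρ(λ)}, where ρ(λ) = p/(p-1-λ). -/

import Mathlib

/-!
Write `t = (s - l) / δ`, `X = (u - l) / δ`, and `ψ` for the integral with general exponents,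
integrand `s ^ q (1 + t) ^ b t ^ e`; the theorem is the case `q = 1/p`, `b = -(1-λ)/p`,
`e = -2λ/p`, where `b + e + 1 = 1/ρ`. Dropping the `1` in `1 + t` bounds the integrand by
`u ^ q t ^ (b + e)`, whose integral is explicit, so `ψ(u) ≤ ρ u ^ q X ^ (1/ρ)`. On the upper half
`[(l + u)/2, u]` of the interval, `s ≥ u/2`, `t ≤ X` and `1 + t ≤ (1 + 1/ε) X` because `X ≥ ε`,
so the integrand is at least a constant multiple of `u ^ q X ^ (b + e)`, and
`ψ(u) ≥ c₀ u ^ q X ^ (1/ρ)`. Raising both bounds to the power `ρ` gives the claim, as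
`(u ^ q X ^ (1/ρ)) ^ ρ = u ^ (1/(p-1-λ)) X`.
-/

open Real MeasureTheory intervalIntegral Set

noncomputable def psiIntegrand (q b e l δ s : ℝ) : ℝ :=
  s ^ q * (1 + (s - l) / δ) ^ b * ((s - l) / δ) ^ e

noncomputable def psi (q b e l δ u : ℝ) : ℝ :=
  (1 / δ) * ∫ s in l..u, psiIntegrand q b e l δ s

theorem integral_rpow_sub_div {a : ℝ} (ha : -1 < a) (l u : ℝ) {δ : ℝ} (hδ : δ ≠ 0) :
    ∫ s in l..u, ((s - l) / δ) ^ a = δ * ((u - l) / δ) ^ (a + 1) / (a + 1) := by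
  simp_rw [sub_div]
  rw [integral_comp_div_sub (fun t => t ^ a) hδ, sub_self, ← sub_div, integral_rpow (Or.inl ha),
    zero_rpow (by linarith), smul_eq_mul]
  ring

theorem intervalIntegrable_rpow_sub_div {a : ℝ} (ha : -1 < a) (l u : ℝ) {δ : ℝ} (hδ : δ ≠ 0) :
    IntervalIntegrable (fun s => ((s - l) / δ) ^ a) volume l u := by
  have := ((intervalIntegrable_rpow' ha (a := 0) (b := (u - l) / δ)).comp_mul_right
    (c := δ⁻¹)).comp_sub_right l
  simpa [div_eq_mul_inv, hδ] using this

section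

variable {q b e l δ : ℝ}

theorem psiIntegrand_nonneg (hl : 0 ≤ l) (hδ : 0 < δ) {s : ℝ} (hs : l ≤ s) :
    0 ≤ psiIntegrand q b e l δ s := by
  have ht : 0 ≤ (s - l) / δ := div_nonneg (sub_nonneg.2 hs) hδ.le
  have hs0 : 0 ≤ s := hl.trans hs
  unfold psiIntegrand
  positivity

theorem continuousOn_psiIntegrand (hl : 0 ≤ l) (hδ : 0 < δ) :
    ContinuousOn (psiIntegrand q b e l δ) (Ioi l) := by
  intro s hs
  have ht : 0 < (s - l) / δ := div_pos (sub_pos.2 hs) hδ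
  have hs0 : 0 < s := hl.trans_lt hs
  apply ContinuousAt.continuousWithinAt
  unfold psiIntegrand
  fun_prop (disch := first | (left; positivity) | (left; apply ne_of_gt; linarith))

theorem psiIntegrand_le (hq : 0 ≤ q) (hb : b ≤ 0) (hl : 0 ≤ l) (hδ : 0 < δ) {s u : ℝ}
    (hls : l < s) (hsu : s ≤ u) :
    psiIntegrand q b e l δ s ≤ u ^ q * ((s - l) / δ) ^ (b + e) := by
  have ht : 0 < (s - l) / δ := div_pos (sub_pos.2 hls) hδ
  have hs0 : 0 < s := hl.trans_lt hls
  have h1t : 0 < 1 + (s - l) / δ := by linarith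
  have hu : 0 ≤ u := by linarith
  rw [rpow_add ht, psiIntegrand, mul_assoc]
  exact mul_le_mul (rpow_le_rpow hs0.le hsu hq)
    (mul_le_mul_of_nonneg_right (rpow_le_rpow_of_nonpos ht (by linarith) hb) (by positivity))
    (by positivity) (by positivity)

theorem intervalIntegrable_psiIntegrand (hq : 0 ≤ q) (hb : b ≤ 0) (hbe : -1 < b + e)
    (hl : 0 ≤ l) (hδ : 0 < δ) {u : ℝ} (hlu : l ≤ u) :
    IntervalIntegrable (psiIntegrand q b e l δ) volume l u := by
  refine ((intervalIntegrable_rpow_sub_div hbe l u hδ.ne').const_mul (u ^ q)).mono_fun' ?_ ?_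
  · rw [uIoc_of_le hlu]
    exact ((continuousOn_psiIntegrand hl hδ).mono Ioc_subset_Ioi_self).aestronglyMeasurable
      measurableSet_Ioc
  · rw [uIoc_of_le hlu]
    refine (ae_restrict_mem measurableSet_Ioc).mono fun s hs => ?_
    dsimp only
    rw [norm_of_nonneg (psiIntegrand_nonneg hl hδ hs.1.le)]
    exact psiIntegrand_le hq hb hl hδ hs.1 hs.2

theorem psi_le (hq : 0 ≤ q) (hb : b ≤ 0) (hbe : -1 < b + e) (hl : 0 ≤ l) (hδ : 0 < δ) {u : ℝ}
    (hlu : l ≤ u) :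
    psi q b e l δ u ≤ u ^ q * ((u - l) / δ) ^ (b + e + 1) / (b + e + 1) := by
  calc psi q b e l δ u ≤ (1 / δ) * ∫ s in l..u, u ^ q * ((s - l) / δ) ^ (b + e) := by
        unfold psi
        gcongr
        exact integral_mono_on_of_le_Ioo hlu (intervalIntegrable_psiIntegrand hq hb hbe hl hδ hlu)
          ((intervalIntegrable_rpow_sub_div hbe l u hδ.ne').const_mul _)
          fun s hs => psiIntegrand_le hq hb hl hδ hs.1 hs.2.le
    _ = u ^ q * ((u - l) / δ) ^ (b + e + 1) / (b + e + 1) := by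
        rw [intervalIntegral.integral_const_mul, integral_rpow_sub_div hbe l u hδ.ne']
        field_simp

theorem le_psiIntegrand (hq : 0 ≤ q) (hb : b ≤ 0) (he : e ≤ 0) (hl : 0 ≤ l) (hδ : 0 < δ)
    {ε u s : ℝ} (hε : 0 < ε) (hεu : ε ≤ (u - l) / δ) (hs : (l + u) / 2 ≤ s) (hsu : s ≤ u) :
    (1 / 2) ^ q * (1 + 1 / ε) ^ b * (u ^ q * ((u - l) / δ) ^ (b + e)) ≤
      psiIntegrand q b e l δ s := by
  set X := (u - l) / δ
  have hX : 0 < X := hε.trans_le hεu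
  have hlu : l < u := sub_pos.1 ((div_pos_iff_of_pos_right hδ).1 hX)
  have ht : 0 < (s - l) / δ := div_pos (by linarith) hδ
  have htX : (s - l) / δ ≤ X := div_le_div_of_nonneg_right (by linarith) hδ.le
  have hu : 0 ≤ u := hl.trans hlu.le
  have hs0 : 0 ≤ s := by linarith
  have h1t : 1 + (s - l) / δ ≤ (1 + 1 / ε) * X := by
    have : 1 ≤ X * (1 / ε) := by rwa [← div_eq_mul_one_div, one_le_div hε]
    nlinarith
  calc (1 / 2) ^ q * (1 + 1 / ε) ^ b * (u ^ q * X ^ (b + e))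
      = (u / 2) ^ q * ((1 + 1 / ε) * X) ^ b * X ^ e := by
        rw [div_eq_mul_one_div u, mul_rpow hu (by norm_num), mul_rpow (by positivity) hX.le,
          rpow_add hX]
        ring
    _ ≤ s ^ q * (1 + (s - l) / δ) ^ b * ((s - l) / δ) ^ e := by
        refine mul_le_mul (mul_le_mul (rpow_le_rpow (by positivity) (by linarith) hq)
          (rpow_le_rpow_of_nonpos (by positivity) h1t hb) (by positivity) (by positivity))
          (rpow_le_rpow_of_nonpos ht htX he) (by positivity) (by positivity)

theorem le_psi (hq : 0 ≤ q) (hb : b ≤ 0) (he : e ≤ 0) (hbe : -1 < b + e) (hl : 0 ≤ l)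
    (hδ : 0 < δ) {ε u : ℝ} (hε : 0 < ε) (hεu : ε ≤ (u - l) / δ) :
    (1 / 2) ^ (q + 1) * (1 + 1 / ε) ^ b * (u ^ q * ((u - l) / δ) ^ (b + e + 1)) ≤
      psi q b e l δ u := by
  set X := (u - l) / δ with hX_def
  have hX : 0 < X := hε.trans_le hεu
  have hlu : l ≤ u := (sub_pos.1 ((div_pos_iff_of_pos_right hδ).1 hX)).le
  set m := (l + u) / 2 with hm
  set K := (1 / 2) ^ q * (1 + 1 / ε) ^ b * (u ^ q * X ^ (b + e)) with hK
  have hf := intervalIntegrable_psiIntegrand hq hb hbe hl hδ hlu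
  have hlm : l ≤ m := by linarith
  have hmu : m ≤ u := by linarith
  have hKf : K * (u - m) ≤ ∫ s in l..u, psiIntegrand q b e l δ s :=
    calc K * (u - m) = ∫ _ in m..u, K := by simp [mul_comm]
      _ ≤ ∫ s in m..u, psiIntegrand q b e l δ s :=
        integral_mono_on hmu intervalIntegrable_const
          (hf.mono_set (uIcc_subset_uIcc (mem_uIcc_of_le hlm hmu) right_mem_uIcc))
          fun s hs => le_psiIntegrand hq hb he hl hδ hε hεu hs.1 hs.2
      _ ≤ ∫ s in l..u, psiIntegrand q b e l δ s :=
        integral_mono_interval hlm hmu le_rfl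
          ((ae_restrict_mem measurableSet_Ioc).mono fun s hs =>
            psiIntegrand_nonneg hl hδ hs.1.le) hf
  have hum : u - m = δ * X / 2 := by rw [hX_def]; field_simp; ring
  calc (1 / 2) ^ (q + 1) * (1 + 1 / ε) ^ b * (u ^ q * X ^ (b + e + 1))
      = (1 / δ) * (K * (u - m)) := by
        rw [hum, hK, rpow_add_one (by norm_num : (1 / 2 : ℝ) ≠ 0), rpow_add_one hX.ne']
        field_simp
    _ ≤ psi q b e l δ u := by
        unfold psi
        gcongr

end

theorem rpow_neg_mul_rpow_le_rpow {x A C ρ : ℝ} (hC : 0 < C) (hA : 0 ≤ A) (hx : 0 ≤ x)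
    (hρ : 0 ≤ ρ) (h : x ≤ C * A) : C ^ (-ρ) * x ^ ρ ≤ A ^ ρ :=
  calc C ^ (-ρ) * x ^ ρ ≤ C ^ (-ρ) * (C * A) ^ ρ := by gcongr
    _ = A ^ ρ := by
      rw [mul_rpow hC.le hA, ← mul_assoc, ← rpow_add hC, neg_add_cancel, rpow_zero, one_mul]

theorem rpow_le_rpow_neg_mul_rpow {x A c ρ : ℝ} (hc : 0 < c) (hA : 0 ≤ A) (hρ : 0 ≤ ρ)
    (h : c * A ≤ x) : A ^ ρ ≤ c ^ (-ρ) * x ^ ρ :=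
  calc A ^ ρ = c ^ (-ρ) * (c * A) ^ ρ := by
        rw [mul_rpow hc.le hA, ← mul_assoc, ← rpow_add hc, neg_add_cancel, rpow_zero, one_mul]
    _ ≤ c ^ (-ρ) * x ^ ρ := by gcongr

/-- two-sided comparability of ψ(u)^{ρ(λ)} with u^{1/(p-1-λ)}(u-l)/δ. -/
theorem psi_comparable (p lam δ l : ℝ) (hp : 2 < p) (hlam : lam ∈ Set.Ioo (0:ℝ) (1/2))
    (hplam : 0 < p - 1 - lam) (hδ : 0 < δ) (hl : 0 ≤ l)
    (ε : ℝ) (hε : ε ∈ Set.Ioo (0:ℝ) 1) :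
    ∃ c C : ℝ, 0 < c ∧ c ≤ C ∧ ∀ u, l ≤ u → ε ≤ (u - l) / δ →
      c * ((1/δ) * ∫ s in l..u,
            s ^ (1/p) * (1 + (s - l)/δ) ^ (-(1 - lam)/p) * ((s - l)/δ) ^ (-(2 * lam)/p))
          ^ (p / (p - 1 - lam))
        ≤ u ^ (1/(p - 1 - lam)) * ((u - l)/δ)
      ∧ u ^ (1/(p - 1 - lam)) * ((u - l)/δ)
        ≤ C * ((1/δ) * ∫ s in l..u,
            s ^ (1/p) * (1 + (s - l)/δ) ^ (-(1 - lam)/p) * ((s - l)/δ) ^ (-(2 * lam)/p))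
          ^ (p / (p - 1 - lam)) := by
  obtain ⟨hlam0, hlam1⟩ := hlam
  have hp0 : 0 < p := by linarith
  set ρ := p / (p - 1 - lam) with hρ_def
  have hρ : 0 < ρ := div_pos hp0 hplam
  have hq : 0 ≤ 1 / p := by positivity
  have hb : -(1 - lam) / p ≤ 0 := div_nonpos_of_nonpos_of_nonneg (by linarith) hp0.le
  have he : -(2 * lam) / p ≤ 0 := div_nonpos_of_nonpos_of_nonneg (by linarith) hp0.le
  have hexp : -(1 - lam) / p + -(2 * lam) / p + 1 = ρ⁻¹ := by rw [hρ_def]; field_simp; ring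
  have hbe : -1 < -(1 - lam) / p + -(2 * lam) / p := by linarith [inv_pos.2 hρ]
  set c₀ := (1 / 2) ^ (1 / p + 1) * (1 + 1 / ε) ^ (-(1 - lam) / p)
  have hc₀ : 0 < c₀ := by have := hε.1; positivity
  refine ⟨min (ρ ^ (-ρ)) (c₀ ^ (-ρ)), max (ρ ^ (-ρ)) (c₀ ^ (-ρ)), by positivity, min_le_max,
    fun u hlu hεu => ?_⟩
  have hX : 0 < (u - l) / δ := hε.1.trans_le hεu
  have hu : 0 ≤ u := hl.trans hlu
  set A := u ^ (1 / p) * ((u - l) / δ) ^ ρ⁻¹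
  have hA : 0 ≤ A := by positivity
  have hAρ : A ^ ρ = u ^ (1 / (p - 1 - lam)) * ((u - l) / δ) := by
    rw [mul_rpow (by positivity) (by positivity), ← rpow_mul hu, ← rpow_mul hX.le,
      inv_mul_cancel₀ hρ.ne', rpow_one, hρ_def]
    field_simp
  have hup := psi_le hq hb hbe hl hδ hlu
  have hlo := le_psi hq hb he hbe hl hδ hε.1 hεu
  rw [hexp, div_inv_eq_mul] at hup
  rw [hexp] at hlo
  have hψ : 0 ≤ psi (1 / p) (-(1 - lam) / p) (-(2 * lam) / p) l δ u :=
    (mul_nonneg hc₀.le hA).trans hlo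
  rw [← hAρ]
  exact ⟨(mul_le_mul_of_nonneg_right (min_le_left _ _) (rpow_nonneg hψ _)).trans
      (rpow_neg_mul_rpow_le_rpow hρ hA hψ hρ.le (hup.trans_eq (mul_comm _ _))),
    (rpow_le_rpow_neg_mul_rpow hc₀ hA hρ.le hlo).trans
      (mul_le_mul_of_nonneg_right (le_max_right _ _) (rpow_nonneg hψ _))⟩
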